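/- Let k be a field and F a formal group law over k. For r ∈ k⟦t⟧ let r(F(t,X)) ∈ k⟦t,X⟧ denote the substitution of F(t,X) for t (well-defined since F(t,X) has zero constant term), and define ∂_n(r) ∈ k⟦t⟧ to be the coefficient of X^n in r(F(t,X)). Then (∂_n)_{n ∈ ℕ} is an HS-derivation on k⟦t⟧ over k (∂_0 = id, each ∂_n additive and vanishing on k for n > 0, ∂_n(xy) = Σ_{j+l=n} ∂_j(x)∂_l(y)), it is F-iterative, and ∂_n(t) equals the coefficient of X^n in F(t,X). This is the canonical F-derivation on k⟦t⟧. -/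

import Mathlib

/-- The coefficient of `X^i Y^j` in a two-variable power series `F`. -/
noncomputable def fglCoeff {k : Type*} [CommRing k] (F : MvPowerSeries (Fin 2) k)
    (i j : ℕ) : k :=
  MvPowerSeries.coeff (Finsupp.single (0 : Fin 2) i + Finsupp.single (1 : Fin 2) j) F

/-- `fglA F i j n` is the coefficient of `X^i Y^j` in `F(X,Y)^n`. -/
noncomputable def fglA {k : Type*} [CommRing k] (F : MvPowerSeries (Fin 2) k)
    (i j n : ℕ) : k :=
  fglCoeff (F ^ n) i j

/-- `F` is a (one-dimensional, commutative-ring-coefficient) formal group law, stated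
coefficient-wise: `F(X,0) = X`, `F(0,Y) = Y` and `F(F(X,Y),Z) = F(X,F(Y,Z))`
(coefficient of `X^i Y^j Z^l` on both sides). -/
def IsFormalGroupLaw {k : Type*} [CommRing k] (F : MvPowerSeries (Fin 2) k) : Prop :=
  (∀ i, fglCoeff F i 0 = if i = 1 then 1 else 0) ∧
  (∀ j, fglCoeff F 0 j = if j = 1 then 1 else 0) ∧
  (∀ i j l, ∑ n ∈ Finset.range (i + j + 1), fglCoeff F n l * fglA F i j n
          = ∑ m ∈ Finset.range (j + l + 1), fglCoeff F i m * fglA F j l m)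

/-! `∂_n r` is the coefficient of `X^n` in `r(F(t,X))`, and `r ↦ r(F(t,X))` is a ring
homomorphism: coefficientwise this is the Leibniz rule, which comes from `F^(a+b) = F^a F^b`.
Both `∂_i ∘ ∂_j` and `Σ_n a(i,j,n) ∂_n` then satisfy a Leibniz rule indexed by pairs `(i, j)`,
so the series on which they agree are closed under products. They agree on `1`, and on `t` by
associativity of `F`, hence on every `t^a`. As the `p`-th coefficient of either side involves
only the first `p + i + j + 1` coefficients of the argument, they agree everywhere. -/

open Finset

theorem sum_range_sum_antidiagonal_eq_sum_range_sum_range {M : Type*} [AddCommMonoid M] (N : ℕ)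
    (g : ℕ → ℕ → M) (hg : ∀ a b, N < a + b → g a b = 0) :
    ∑ m ∈ range (N + 1), ∑ p ∈ antidiagonal m, g p.1 p.2 =
      ∑ a ∈ range (N + 1), ∑ b ∈ range (N + 1), g a b := by
  simp_rw [Nat.sum_antidiagonal_eq_sum_range_succ g, Nat.succ_eq_add_one, sum_range_diag_flip]
  refine sum_congr rfl fun a _ ↦ sum_subset (range_subset_range.2 (by omega)) fun b _ hb ↦ ?_
  simp only [mem_range, not_lt] at hb
  exact hg a b (by omega)

theorem sum_antidiagonal_single_add_single {M : Type*} [AddCommMonoid M] (i j : ℕ)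
    (f : (Fin 2 →₀ ℕ) → (Fin 2 →₀ ℕ) → M) :
    ∑ d ∈ antidiagonal (Finsupp.single (0 : Fin 2) i + Finsupp.single 1 j), f d.1 d.2 =
      ∑ p ∈ antidiagonal i, ∑ q ∈ antidiagonal j,
        f (Finsupp.single 0 p.1 + Finsupp.single 1 q.1)
          (Finsupp.single 0 p.2 + Finsupp.single 1 q.2) := by
  rw [← sum_product']
  have hsplit (d : Fin 2 →₀ ℕ) : Finsupp.single 0 (d 0) + Finsupp.single 1 (d 1) = d := by
    ext a; fin_cases a <;> simp
  refine sum_nbij' (fun d ↦ ((d.1 0, d.2 0), (d.1 1, d.2 1)))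
    (fun pq ↦ (Finsupp.single 0 pq.1.1 + Finsupp.single 1 pq.2.1,
      Finsupp.single 0 pq.1.2 + Finsupp.single 1 pq.2.2)) ?_ ?_ ?_ ?_ ?_
  · rintro ⟨d₁, d₂⟩ hd
    rw [HasAntidiagonal.mem_antidiagonal] at hd
    simp only [mem_product, HasAntidiagonal.mem_antidiagonal]
    exact ⟨by simpa using DFunLike.congr_fun hd 0, by simpa using DFunLike.congr_fun hd 1⟩
  · rintro ⟨⟨p₁, p₂⟩, ⟨q₁, q₂⟩⟩ hpq
    simp only [mem_product, HasAntidiagonal.mem_antidiagonal] at hpq ⊢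
    rw [← hpq.1, ← hpq.2, Finsupp.single_add, Finsupp.single_add]
    abel
  · rintro ⟨d₁, d₂⟩ -
    simp [hsplit]
  · rintro ⟨⟨p₁, p₂⟩, ⟨q₁, q₂⟩⟩ -
    simp
  · rintro ⟨d₁, d₂⟩ -
    simp [hsplit]

section Bivariate

variable {k : Type*} [CommRing k]

theorem fglCoeff_mul (G H : MvPowerSeries (Fin 2) k) (i j : ℕ) :
    fglCoeff (G * H) i j =
      ∑ p ∈ antidiagonal i, ∑ q ∈ antidiagonal j, fglCoeff G p.1 q.1 * fglCoeff H p.2 q.2 := by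
  rw [fglCoeff, MvPowerSeries.coeff_mul, sum_antidiagonal_single_add_single i j
    fun u v ↦ MvPowerSeries.coeff u G * MvPowerSeries.coeff v H]
  rfl

theorem fglA_add (F : MvPowerSeries (Fin 2) k) (i j a b : ℕ) :
    fglA F i j (a + b) =
      ∑ p ∈ antidiagonal i, ∑ q ∈ antidiagonal j, fglA F p.1 q.1 a * fglA F p.2 q.2 b := by
  rw [fglA, pow_add, fglCoeff_mul]
  rfl

theorem fglA_zero (F : MvPowerSeries (Fin 2) k) (i j : ℕ) :
    fglA F i j 0 = if i = 0 ∧ j = 0 then 1 else 0 := by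
  simp [fglA, fglCoeff, MvPowerSeries.coeff_one]

variable {F : MvPowerSeries (Fin 2) k}

theorem fglA_eq_zero_of_lt (hF0 : MvPowerSeries.constantCoeff F = 0) {i j n : ℕ}
    (h : i + j < n) : fglA F i j n = 0 :=
  MvPowerSeries.coeff_of_lt_order <| by
    refine lt_of_lt_of_le ?_ (MvPowerSeries.le_order_pow_of_constantCoeff_eq_zero n hF0)
    exact_mod_cast (by simpa using h)

theorem fglA_right_zero (hF1 : ∀ i, fglCoeff F i 0 = if i = 1 then 1 else 0) (i m : ℕ) :
    fglA F i 0 m = if i = m then 1 else 0 := by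
  induction m generalizing i with
  | zero => simp [fglA_zero]
  | succ m ih =>
    rw [fglA_add, Nat.antidiagonal_zero, sum_congr rfl fun p _ ↦ sum_singleton _ _]
    have hA1 (p : ℕ) : fglA F p 0 1 = fglCoeff F p 0 := by rw [fglA, pow_one]
    have hpair (p : ℕ × ℕ) : (p.1 = m ∧ p.2 = 1) ↔ p = (m, 1) := by rw [Prod.ext_iff]
    simp only [ih, hA1, hF1, ite_zero_mul_ite_zero, one_mul, hpair, sum_ite_eq',
      HasAntidiagonal.mem_antidiagonal]
    exact if_congr eq_comm rfl rfl

theorem sum_range_fglA_smul_of_le (hF0 : MvPowerSeries.constantCoeff F = 0) {M : Type*}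
    [AddCommMonoid M] [Module k M] {i j N : ℕ} (h : i + j ≤ N) (f : ℕ → M) :
    ∑ m ∈ range (N + 1), fglA F i j m • f m = ∑ m ∈ range (i + j + 1), fglA F i j m • f m := by
  refine (sum_subset (range_subset_range.2 (by omega)) fun m _ hm ↦ ?_).symm
  simp only [mem_range, not_lt] at hm
  rw [fglA_eq_zero_of_lt hF0 (by omega), zero_smul]

/-- Coefficientwise form of `(f * g)(F) = f(F) * g(F)`. -/
theorem sum_fglA_smul_sum_antidiagonal (hF0 : MvPowerSeries.constantCoeff F = 0)
    {S : Type*} [CommRing S] [Algebra k S] (i j : ℕ) (f g : ℕ → S) :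
    ∑ m ∈ range (i + j + 1), fglA F i j m • ∑ ab ∈ antidiagonal m, f ab.1 * g ab.2 =
      ∑ p ∈ antidiagonal i, ∑ q ∈ antidiagonal j,
        (∑ a ∈ range (p.1 + q.1 + 1), fglA F p.1 q.1 a • f a) *
          (∑ b ∈ range (p.2 + q.2 + 1), fglA F p.2 q.2 b • g b) := by
  calc
    _ = ∑ m ∈ range (i + j + 1), ∑ ab ∈ antidiagonal m,
          fglA F i j (ab.1 + ab.2) • (f ab.1 * g ab.2) := by
      refine sum_congr rfl fun m _ ↦ ?_
      rw [smul_sum]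
      exact sum_congr rfl fun ab hab ↦ by rw [HasAntidiagonal.mem_antidiagonal.1 hab]
    _ = ∑ a ∈ range (i + j + 1), ∑ b ∈ range (i + j + 1), fglA F i j (a + b) • (f a * g b) :=
      sum_range_sum_antidiagonal_eq_sum_range_sum_range _
        (fun a b ↦ fglA F i j (a + b) • (f a * g b)) fun a b h ↦ by
        rw [fglA_eq_zero_of_lt hF0 h, zero_smul]
    _ = ∑ a ∈ range (i + j + 1), ∑ b ∈ range (i + j + 1), ∑ p ∈ antidiagonal i,
          ∑ q ∈ antidiagonal j, (fglA F p.1 q.1 a • f a) * (fglA F p.2 q.2 b • g b) := by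
      simp_rw [fglA_add, sum_smul, smul_mul_smul_comm]
    _ = ∑ p ∈ antidiagonal i, ∑ q ∈ antidiagonal j, ∑ a ∈ range (i + j + 1),
          ∑ b ∈ range (i + j + 1), (fglA F p.1 q.1 a • f a) * (fglA F p.2 q.2 b • g b) :=
      (sum_congr rfl fun a _ ↦ sum_comm.trans (sum_congr rfl fun p _ ↦ sum_comm)).trans
        (sum_comm.trans (sum_congr rfl fun p _ ↦ sum_comm))
    _ = _ := by
      refine sum_congr rfl fun p hp ↦ sum_congr rfl fun q hq ↦ ?_
      rw [HasAntidiagonal.mem_antidiagonal] at hp hq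
      rw [← sum_range_fglA_smul_of_le hF0 (N := i + j) (show p.1 + q.1 ≤ i + j by omega),
        ← sum_range_fglA_smul_of_le hF0 (N := i + j) (show p.2 + q.2 ≤ i + j by omega),
        sum_mul_sum]

end Bivariate

section CanonicalDeriv

open PowerSeries

variable {k : Type*} [CommRing k]

/-- `canonicalDeriv F n r` is the coefficient of `X^n` in `r(F(t,X)) = Σ_m r_m F(t,X)^m`; the sum
stops at `m = i + n` because `F^m` has order at least `m`. -/
noncomputable def canonicalDeriv (F : MvPowerSeries (Fin 2) k) (n : ℕ) :
    PowerSeries k →ₗ[k] PowerSeries k where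
  toFun r := mk fun i ↦ ∑ m ∈ range (i + n + 1), coeff m r * fglA F i n m
  map_add' x y := by ext i; simp [add_mul, sum_add_distrib]
  map_smul' c x := by ext i; simp [mul_sum, mul_assoc]

variable {F : MvPowerSeries (Fin 2) k}

theorem coeff_canonicalDeriv (n i : ℕ) (r : PowerSeries k) :
    coeff i (canonicalDeriv F n r) = ∑ m ∈ range (i + n + 1), fglA F i n m • coeff m r := by
  simp [canonicalDeriv, mul_comm]

theorem canonicalDeriv_zero_apply (hF1 : ∀ i, fglCoeff F i 0 = if i = 1 then 1 else 0)
    (r : PowerSeries k) : canonicalDeriv F 0 r = r := by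
  ext i
  simp [coeff_canonicalDeriv, fglA_right_zero hF1]

theorem canonicalDeriv_one (n : ℕ) : canonicalDeriv F n 1 = if n = 0 then 1 else 0 := by
  ext i
  by_cases hn : n = 0 <;> simp [hn, coeff_canonicalDeriv, coeff_one, fglA_zero]

theorem canonicalDeriv_C {n : ℕ} (hn : 0 < n) (c : k) : canonicalDeriv F n (C c) = 0 := by
  rw [← mul_one (C c), ← smul_eq_C_mul, map_smul, canonicalDeriv_one, if_neg hn.ne', smul_zero]

theorem canonicalDeriv_X_pow (hF0 : MvPowerSeries.constantCoeff F = 0) (n a : ℕ) :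
    canonicalDeriv F n (X ^ a) = mk fun i ↦ fglA F i n a := by
  ext i
  simpa [coeff_canonicalDeriv, coeff_X_pow] using fun h ↦ (fglA_eq_zero_of_lt hF0 h).symm

theorem canonicalDeriv_X (hF0 : MvPowerSeries.constantCoeff F = 0) (n : ℕ) :
    canonicalDeriv F n X = mk fun i ↦ fglCoeff F i n := by
  simpa [fglA] using canonicalDeriv_X_pow hF0 n 1

theorem canonicalDeriv_mul (hF0 : MvPowerSeries.constantCoeff F = 0) (n : ℕ)
    (x y : PowerSeries k) :
    canonicalDeriv F n (x * y) =
      ∑ q ∈ antidiagonal n, canonicalDeriv F q.1 x * canonicalDeriv F q.2 y := by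
  ext i
  simp_rw [coeff_canonicalDeriv, coeff_mul, map_sum, coeff_mul, coeff_canonicalDeriv]
  rw [sum_fglA_smul_sum_antidiagonal hF0 i n (coeff · x) (coeff · y), sum_comm]

theorem canonicalDeriv_canonicalDeriv_mul (hF0 : MvPowerSeries.constantCoeff F = 0) (i j : ℕ)
    (x y : PowerSeries k) :
    canonicalDeriv F i (canonicalDeriv F j (x * y)) =
      ∑ p ∈ antidiagonal i, ∑ q ∈ antidiagonal j,
        canonicalDeriv F p.1 (canonicalDeriv F q.1 x) *
          canonicalDeriv F p.2 (canonicalDeriv F q.2 y) := by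
  simp_rw [canonicalDeriv_mul hF0, map_sum, canonicalDeriv_mul hF0]
  exact sum_comm

theorem sum_fglA_smul_canonicalDeriv_mul (hF0 : MvPowerSeries.constantCoeff F = 0) (i j : ℕ)
    (x y : PowerSeries k) :
    ∑ n ∈ range (i + j + 1), fglA F i j n • canonicalDeriv F n (x * y) =
      ∑ p ∈ antidiagonal i, ∑ q ∈ antidiagonal j,
        (∑ a ∈ range (p.1 + q.1 + 1), fglA F p.1 q.1 a • canonicalDeriv F a x) *
          (∑ b ∈ range (p.2 + q.2 + 1), fglA F p.2 q.2 b • canonicalDeriv F b y) := by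
  simp_rw [canonicalDeriv_mul hF0]
  exact sum_fglA_smul_sum_antidiagonal hF0 i j (canonicalDeriv F · x) (canonicalDeriv F · y)

variable (F) in
def IsIterativeAt (x : PowerSeries k) : Prop :=
  ∀ i j, canonicalDeriv F i (canonicalDeriv F j x) =
    ∑ n ∈ range (i + j + 1), fglA F i j n • canonicalDeriv F n x

theorem IsIterativeAt.mul (hF0 : MvPowerSeries.constantCoeff F = 0) {x y : PowerSeries k}
    (hx : IsIterativeAt F x) (hy : IsIterativeAt F y) : IsIterativeAt F (x * y) := fun i j ↦ by
  rw [canonicalDeriv_canonicalDeriv_mul hF0, sum_fglA_smul_canonicalDeriv_mul hF0]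
  exact sum_congr rfl fun p _ ↦ sum_congr rfl fun q _ ↦ by rw [hx, hy]

theorem isIterativeAt_one : IsIterativeAt F 1 := fun i j ↦ by
  by_cases hj : j = 0 <;> simp [hj, canonicalDeriv_one, fglA_zero]

theorem isIterativeAt_X (hF0 : MvPowerSeries.constantCoeff F = 0)
    (hassoc : ∀ i j l, ∑ n ∈ range (i + j + 1), fglCoeff F n l * fglA F i j n
      = ∑ m ∈ range (j + l + 1), fglCoeff F i m * fglA F j l m) :
    IsIterativeAt F X := fun i j ↦ by
  ext p
  simp only [canonicalDeriv_X hF0, coeff_canonicalDeriv, map_sum, coeff_smul, coeff_mk]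
  simpa [mul_comm] using hassoc p i j

theorem isIterativeAt_X_pow (hF0 : MvPowerSeries.constantCoeff F = 0)
    (hassoc : ∀ i j l, ∑ n ∈ range (i + j + 1), fglCoeff F n l * fglA F i j n
      = ∑ m ∈ range (j + l + 1), fglCoeff F i m * fglA F j l m) (a : ℕ) :
    IsIterativeAt F (X ^ a) := by
  induction a with
  | zero => simpa using isIterativeAt_one
  | succ a ih => simpa [pow_succ] using ih.mul hF0 (isIterativeAt_X hF0 hassoc)

theorem coeff_canonicalDeriv_eq_sum_X_pow (hF0 : MvPowerSeries.constantCoeff F = 0)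
    {p n N : ℕ} (h : p + n ≤ N) (r : PowerSeries k) :
    coeff p (canonicalDeriv F n r) =
      ∑ a ∈ range (N + 1), coeff a r * coeff p (canonicalDeriv F n (X ^ a)) := by
  rw [coeff_canonicalDeriv, ← sum_range_fglA_smul_of_le hF0 h]
  simp [canonicalDeriv_X_pow hF0, mul_comm]

theorem coeff_canonicalDeriv_canonicalDeriv_eq_sum (hF0 : MvPowerSeries.constantCoeff F = 0)
    (p i j : ℕ) (x : PowerSeries k) :
    coeff p (canonicalDeriv F i (canonicalDeriv F j x)) = ∑ a ∈ range (p + i + j + 1),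
      coeff a x * coeff p (canonicalDeriv F i (canonicalDeriv F j (X ^ a))) := by
  calc
    _ = ∑ m ∈ range (p + i + 1),
          coeff m (canonicalDeriv F j x) * coeff p (canonicalDeriv F i (X ^ m)) :=
      coeff_canonicalDeriv_eq_sum_X_pow hF0 le_rfl _
    _ = ∑ m ∈ range (p + i + 1), ∑ a ∈ range (p + i + j + 1),
          coeff a x * coeff m (canonicalDeriv F j (X ^ a)) *
            coeff p (canonicalDeriv F i (X ^ m)) :=
      sum_congr rfl fun m hm ↦ by
        rw [coeff_canonicalDeriv_eq_sum_X_pow hF0 (N := p + i + j) (by rw [mem_range] at hm; omega),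
          sum_mul]
    _ = _ := by
      rw [sum_comm]
      refine sum_congr rfl fun a _ ↦ ?_
      rw [coeff_canonicalDeriv_eq_sum_X_pow hF0 (le_refl (p + i)), mul_sum]
      simp_rw [mul_assoc]

theorem coeff_sum_fglA_smul_canonicalDeriv_eq_sum (hF0 : MvPowerSeries.constantCoeff F = 0)
    (p i j : ℕ) (x : PowerSeries k) :
    coeff p (∑ n ∈ range (i + j + 1), fglA F i j n • canonicalDeriv F n x) =
      ∑ a ∈ range (p + i + j + 1), coeff a x *
        coeff p (∑ n ∈ range (i + j + 1), fglA F i j n • canonicalDeriv F n (X ^ a)) := by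
  simp_rw [map_sum, coeff_smul]
  calc
    _ = ∑ n ∈ range (i + j + 1), fglA F i j n •
          ∑ a ∈ range (p + i + j + 1), coeff a x * coeff p (canonicalDeriv F n (X ^ a)) :=
      sum_congr rfl fun n hn ↦ by
        rw [coeff_canonicalDeriv_eq_sum_X_pow hF0 (N := p + i + j) (by rw [mem_range] at hn; omega)]
    _ = _ := by
      simp_rw [smul_sum, mul_sum]
      rw [sum_comm]
      simp [smul_eq_mul, mul_left_comm]

theorem isIterativeAt (hF0 : MvPowerSeries.constantCoeff F = 0)
    (hassoc : ∀ i j l, ∑ n ∈ range (i + j + 1), fglCoeff F n l * fglA F i j n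
      = ∑ m ∈ range (j + l + 1), fglCoeff F i m * fglA F j l m) (x : PowerSeries k) :
    IsIterativeAt F x := fun i j ↦ by
  ext p
  rw [coeff_canonicalDeriv_canonicalDeriv_eq_sum hF0,
    coeff_sum_fglA_smul_canonicalDeriv_eq_sum hF0]
  exact sum_congr rfl fun a _ ↦ by rw [isIterativeAt_X_pow hF0 hassoc a i j]

end CanonicalDeriv

/-- For a formal group law `F` over a field `k`, the maps
`∂_n(r) := (coefficient of X^n in r(F(t,X)))` form an `F`-iterative HS-derivation on
`k⟦t⟧` over `k` with `∂_n(t) = (coefficient of X^n in F(t,X))`: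
the canonical `F`-derivation. Here the coefficient of `t^i X^n` in `r(F(t,X)) = Σ_m r_m F^m`
is `Σ_{m ≤ i+n} r_m ⬝ (coefficient of t^i X^n in F^m)`. -/
theorem canonical_F_derivation
    (k : Type*) [Field k] (F : MvPowerSeries (Fin 2) k) (hF : IsFormalGroupLaw F)
    (D : ℕ → PowerSeries k → PowerSeries k)
    (hD : ∀ n r, D n r = PowerSeries.mk
      fun i => ∑ m ∈ Finset.range (i + n + 1), PowerSeries.coeff m r * fglA F i n m) :
    D 0 = id ∧
    (∀ n x y, D n (x + y) = D n x + D n y) ∧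
    (∀ n x y, D n (x * y) = ∑ jl ∈ Finset.HasAntidiagonal.antidiagonal n, D jl.1 x * D jl.2 y) ∧
    (∀ c : k, ∀ n, 0 < n → D n (PowerSeries.C c) = 0) ∧
    (∀ i j x, D i (D j x) = ∑ n ∈ Finset.range (i + j + 1), fglA F i j n • D n x) ∧
    (∀ n, D n PowerSeries.X = PowerSeries.mk fun i => fglCoeff F i n) := by
  obtain ⟨hF1, -, hassoc⟩ := hF
  have hF0 : MvPowerSeries.constantCoeff F = 0 := by simpa [fglCoeff] using hF1 0
  obtain rfl : D = fun n ↦ ⇑(canonicalDeriv F n) := funext fun n ↦ funext (hD n)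
  exact ⟨funext (canonicalDeriv_zero_apply hF1), fun n ↦ map_add _, canonicalDeriv_mul hF0,
    fun c n hn ↦ canonicalDeriv_C hn c, fun i j x ↦ isIterativeAt hF0 hassoc x i j,
    canonicalDeriv_X hF0⟩
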